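/- arXiv:1001.1186 — 3 statements merged into one kernel-verified Lean document; each statement's English description precedes it below -/
import Mathlib

section
/- With Ξ and the polynomials φ_{ij}^x as above, the interpolation scheme (Ξ, S_x(Ξ)) is regular: the evaluation matrix (φ_{ij}^x(u_{mn}^x)), with rows and columns ordered increasingly by ≺_inlex, is upper unitriangular, hence {φ_{ij}^x : (i,j) ∈ S_x(Ξ)} is a basis of Span_F{x^i y^j : (i,j) ∈ S_x(Ξ)} and this span is an interpolation space for Ξ. -/
open MvPolynomial Finset

/-- A finite subset of ℕ² closed under componentwise decrease. -/
def IsLowerSet2 (A : Finset (ℕ × ℕ)) : Prop :=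
  ∀ a ∈ A, ∀ b : ℕ × ℕ, b.1 ≤ a.1 → b.2 ≤ a.2 → b ∈ A

/-- `Ξ` is `A`-cartesian: `Ξ = {(x i, y j) : (i,j) ∈ A}` for a lower set `A`,
with distinct `x i`'s and distinct `y j`'s (on the relevant indices). -/
def IsCartesianWith {F : Type*} [Field F] [DecidableEq F] (A : Finset (ℕ × ℕ)) (Ξ : Finset (F × F)) : Prop :=
  IsLowerSet2 A ∧ ∃ x y : ℕ → F,
    Set.InjOn x {i | ∃ j, (i, j) ∈ A} ∧ Set.InjOn y {j | ∃ i, (i, j) ∈ A} ∧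
    Ξ = A.image fun ij => (x ij.1, y ij.2)

/-- `Ξ` is cartesian. -/
def IsCartesian {F : Type*} [Field F] [DecidableEq F] (Ξ : Finset (F × F)) : Prop :=
  ∃ A, IsCartesianWith A Ξ

/-- Multiset of numbers of points of `Ξ` on the horizontal lines meeting `Ξ`. -/
def rowCounts {F : Type*} [Field F] [DecidableEq F] (Ξ : Finset (F × F)) : Multiset ℕ :=
  (Ξ.image Prod.snd).val.map fun b => (Ξ.filter fun p => p.2 = b).card

/-- Multiset of numbers of points of `Ξ` on the vertical lines meeting `Ξ`. -/
def colCounts {F : Type*} [Field F] [DecidableEq F] (Ξ : Finset (F × F)) : Multiset ℕ :=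
  (Ξ.image Prod.fst).val.map fun a => (Ξ.filter fun p => p.1 = a).card

/-- Multiset of row lengths of a finite subset of ℕ². -/
def rowCountsA (A : Finset (ℕ × ℕ)) : Multiset ℕ :=
  (A.image Prod.snd).val.map fun j => (A.filter fun p => p.2 = j).card

/-- Multiset of column heights of a finite subset of ℕ². -/
def colCountsA (A : Finset (ℕ × ℕ)) : Multiset ℕ :=
  (A.image Prod.fst).val.map fun i => (A.filter fun p => p.1 = i).card

/-- `A` is the lower set `S_x(Ξ)` obtained by covering `Ξ` by horizontal lines
ordered by (nonincreasing) numbers of points: a lower set whose rows have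
exactly the same lengths as the horizontal sections of `Ξ`. -/
def IsSx {F : Type*} [Field F] [DecidableEq F] (Ξ : Finset (F × F)) (A : Finset (ℕ × ℕ)) : Prop :=
  IsLowerSet2 A ∧ rowCountsA A = rowCounts Ξ

/-- `A` is the lower set `S_y(Ξ)` obtained by covering `Ξ` by vertical lines. -/
def IsSy {F : Type*} [Field F] [DecidableEq F] (Ξ : Finset (F × F)) (A : Finset (ℕ × ℕ)) : Prop :=
  IsLowerSet2 A ∧ colCountsA A = colCounts Ξ

/-- Evaluation of a bivariate polynomial at a point of `F²`. -/
noncomputable def evalAt {F : Type*} [Field F] (ξ : F × F) (p : MvPolynomial (Fin 2) F) : F :=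
  MvPolynomial.eval ![ξ.1, ξ.2] p

/-- The span of the monomials `x^i y^j`, `(i,j) ∈ A`. -/
noncomputable def monSpan (F : Type*) [Field F] (A : Finset (ℕ × ℕ)) :
    Submodule F (MvPolynomial (Fin 2) F) :=
  Submodule.span F ((fun ij : ℕ × ℕ => (X 0 : MvPolynomial (Fin 2) F) ^ ij.1 * X 1 ^ ij.2) '' A)

/-- The interpolation scheme `(Ξ, A)` is regular: every data on `Ξ` is matched by a
unique element of the span of the monomials indexed by `A`. -/
def IsRegularScheme {F : Type*} [Field F] (Ξ : Finset (F × F)) (A : Finset (ℕ × ℕ)) : Prop :=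
  ∀ f : F × F → F, ∃! p : MvPolynomial (Fin 2) F,
    p ∈ monSpan F A ∧ ∀ ξ ∈ Ξ, evalAt ξ p = f ξ

/-- The ideal of polynomials vanishing on `Ξ`. -/
noncomputable def vanishingIdeal (F : Type*) [Field F] (Ξ : Finset (F × F)) :
    Ideal (MvPolynomial (Fin 2) F) :=
  ⨅ ξ ∈ Ξ, RingHom.ker (MvPolynomial.eval ![(ξ : F × F).1, ξ.2])

/-- The `≺_lex`-leading exponent (x-exponent compared first), `⊥` for the zero polynomial. -/
noncomputable def lexDeg {F : Type*} [Field F] (p : MvPolynomial (Fin 2) F) :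
    WithBot (ℕ ×ₗ ℕ) :=
  (p.support.image fun d => toLex (d 0, d 1)).max

/-!
Order the nodes `u (m, n)` lexicographically by `(n, m)`. The Newton polynomial `φ (i, j)` takes
the value `1` at `u (i, j)` and vanishes at every earlier node: at a node of a lower row `n < j`
through its factor `y - y_n`, at a node `u (m, j)` with `m < i` through its factor `x - x_{m j}`.
Hence the evaluation matrix is unitriangular and the `φ (i, j)` are linearly independent. They lie
in the span of the `|S|` monomials `x^s y^t`, `(s, t) ∈ S` (because `S` is a lower set), so they
form a basis of it, and evaluation at the `|S|` nodes is a bijection from this span onto `F^Ξ`.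
-/

section Triangular

variable {R : Type*} [Ring R] [NoZeroDivisors R]

theorem linearIndependent_of_triangular {ι α : Type*} [Fintype ι] [LinearOrder α]
    (k : ι → α) (hk : Function.Injective k) (v : ι → ι → R)
    (hdiag : ∀ q, v q q ≠ 0) (hzero : ∀ q r, k r < k q → v q r = 0) :
    LinearIndependent R v := by
  classical
  rw [Fintype.linearIndependent_iff]
  intro g hg
  by_contra! hne
  -- evaluate the relation at the `k`-least index carrying a nonzero coefficient
  obtain ⟨q₀, hq₀, hmin⟩ := Finset.exists_min_image {q | g q ≠ 0} k
    (by simpa [Finset.Nonempty] using hne)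
  have hsum : ∑ q, g q * v q q₀ = 0 := by simpa using congrFun hg q₀
  rw [Finset.sum_eq_single q₀] at hsum
  · exact mul_ne_zero (Finset.mem_filter.1 hq₀).2 (hdiag q₀) hsum
  · intro q _ hq
    by_cases hgq : g q = 0
    · rw [hgq, zero_mul]
    · have hlt : k q₀ < k q :=
        (hmin q (by simpa using hgq)).lt_of_ne fun h => hq (hk h).symm
      rw [hzero q q₀ hlt, mul_zero]
  · simp

end Triangular

section SpanPow

variable {R σ : Type*} [CommRing R]

theorem prod_X_sub_C_mem_span_pow (w : σ) (a : ℕ → R) (n : ℕ) :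
    ∏ t ∈ range n, (X w - C (a t) : MvPolynomial σ R) ∈
      Submodule.span R ((X w ^ ·) '' Set.Iic n) := by
  induction n with
  | zero => exact Submodule.subset_span ⟨0, Set.mem_Iic.2 le_rfl, pow_zero _⟩
  | succ n ih =>
    have hshift : (∏ t ∈ range n, (X w - C (a t))) * X w ∈
        Submodule.span R ((X w ^ ·) '' Set.Iic (n + 1)) := by
      refine Submodule.span_mono ?_
        (Submodule.apply_mem_span_image_of_mem_span (LinearMap.mulRight R (X w)) ih)
      rintro _ ⟨_, ⟨t, ht, rfl⟩, rfl⟩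
      exact ⟨t + 1, Nat.succ_le_succ ht, pow_succ _ _⟩
    rw [prod_range_succ, mul_sub, mul_comm _ (C _), ← smul_eq_C_mul]
    exact sub_mem hshift <| Submodule.smul_mem _ _ <|
      Submodule.span_mono (Set.image_mono (Set.Iic_subset_Iic.2 n.le_succ)) ih

end SpanPow

section Interpolation

variable {F : Type*} [Field F]

instance (A : Finset (ℕ × ℕ)) : FiniteDimensional F (monSpan F A) :=
  FiniteDimensional.span_of_finite F (A.finite_toSet.image _)

theorem finrank_monSpan_le_card (A : Finset (ℕ × ℕ)) :
    Module.finrank F (monSpan F A) ≤ A.card := by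
  rw [monSpan, Set.image_eq_range]
  exact (finrank_range_le_card _).trans_eq (Fintype.card_coe A)

theorem mul_mem_monSpan {A : Finset (ℕ × ℕ)} (hA : IsLowerSet2 A) {i j : ℕ} (hij : (i, j) ∈ A)
    {p q : MvPolynomial (Fin 2) F} (hp : p ∈ Submodule.span F ((X 0 ^ ·) '' Set.Iic i))
    (hq : q ∈ Submodule.span F ((X 1 ^ ·) '' Set.Iic j)) : p * q ∈ monSpan F A := by
  have hpq := Submodule.mul_mem_mul hp hq
  rw [Submodule.span_mul_span] at hpq
  refine Submodule.span_le.2 ?_ hpq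
  rintro _ ⟨_, ⟨s, hs, rfl⟩, _, ⟨t, ht, rfl⟩, rfl⟩
  exact Submodule.subset_span ⟨(s, t), hA _ hij _ hs ht, rfl⟩

noncomputable def nodeEval {ι : Type*} (ν : ι → F × F) : MvPolynomial (Fin 2) F →ₗ[F] (ι → F) :=
  LinearMap.pi fun q => (aeval ![(ν q).1, (ν q).2]).toLinearMap

@[simp]
theorem nodeEval_apply {ι : Type*} (ν : ι → F × F) (p : MvPolynomial (Fin 2) F) (q : ι) :
    nodeEval ν p q = evalAt (ν q) p := by
  simp [nodeEval, evalAt]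

theorem isRegularScheme_of_bijective {ι : Type*} {A : Finset (ℕ × ℕ)} {Ξ : Finset (F × F)}
    {ν : ι → F × F} (hν : Set.range ν = Ξ)
    (h : Function.Bijective (nodeEval ν ∘ₗ (monSpan F A).subtype)) : IsRegularScheme Ξ A := by
  intro f
  obtain ⟨p, hp⟩ := h.2 (f ∘ ν)
  refine ⟨p, ⟨p.2, ?_⟩, ?_⟩
  · rintro ξ hξ
    obtain ⟨q, rfl⟩ : ξ ∈ Set.range ν := hν ▸ Finset.mem_coe.2 hξ
    simpa using congrFun hp q
  · rintro p' ⟨hp'A, hp'Ξ⟩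
    have hvals : (nodeEval ν ∘ₗ (monSpan F A).subtype) ⟨p', hp'A⟩ = f ∘ ν := by
      funext q
      simpa using hp'Ξ (ν q) (Finset.mem_coe.1 (hν ▸ Set.mem_range_self q))
    exact congrArg Subtype.val (h.1 (hvals.trans hp.symm))

variable {A : Finset (ℕ × ℕ)} {b : ℕ × ℕ → MvPolynomial (Fin 2) F}

theorem span_eq_monSpan_of_linearIndependent (hb : ∀ q ∈ A, b q ∈ monSpan F A)
    (hli : LinearIndependent F fun q : A => b q) :
    Submodule.span F (Set.range fun q : A => b q) = monSpan F A := by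
  refine Submodule.eq_of_le_of_finrank_le ?_ ?_
  · exact Submodule.span_le.2 (Set.range_subset_iff.2 fun q => hb q q.2)
  · rw [finrank_span_eq_card hli, Fintype.card_coe]
    exact finrank_monSpan_le_card A

theorem isRegularScheme_of_linearIndependent_nodeEval [DecidableEq F] (u : ℕ × ℕ → F × F)
    (hb : ∀ q ∈ A, b q ∈ monSpan F A)
    (hev : LinearIndependent F fun q : A => nodeEval (fun r : A => u r) (b q)) :
    IsRegularScheme (A.image u) A := by
  set L := nodeEval (fun r : A => u r) ∘ₗ (monSpan F A).subtype
  have hsurj : Function.Surjective L := by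
    rw [← LinearMap.range_eq_top, eq_top_iff,
      ← hev.span_eq_top_of_card_eq_finrank' (by simp), Submodule.span_le]
    rintro _ ⟨q, rfl⟩
    exact ⟨⟨b q, hb q q.2⟩, rfl⟩
  have hdim : Module.finrank F (monSpan F A) = Module.finrank F (A → F) := by
    have hli := hev.of_comp
    rw [← span_eq_monSpan_of_linearIndependent hb hli, finrank_span_eq_card hli]
    simp
  refine isRegularScheme_of_bijective (by simp [Set.image_eq_range]) ⟨?_, hsurj⟩
  exact (LinearMap.injective_iff_surjective_of_finrank_eq_finrank hdim).2 hsurj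

end Interpolation

section Newton

variable {F : Type*} [Field F] {S : Finset (ℕ × ℕ)} {u : ℕ × ℕ → F × F}

noncomputable def newtonPoly (u : ℕ × ℕ → F × F) (ij : ℕ × ℕ) : MvPolynomial (Fin 2) F :=
  C (((∏ t ∈ Finset.range ij.2, ((u (0, ij.2)).2 - (u (0, t)).2)) *
      ∏ s ∈ Finset.range ij.1, ((u (ij.1, ij.2)).1 - (u (s, ij.2)).1))⁻¹) *
    ((∏ t ∈ Finset.range ij.2, (X 1 - C ((u (0, t)).2))) *
      ∏ s ∈ Finset.range ij.1, (X 0 - C ((u (s, ij.2)).1)))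

theorem evalAt_newtonPoly (ξ : F × F) (i j : ℕ) :
    evalAt ξ (newtonPoly u (i, j)) =
      ((∏ t ∈ range j, ((u (0, j)).2 - (u (0, t)).2)) *
        ∏ s ∈ range i, ((u (i, j)).1 - (u (s, j)).1))⁻¹ *
      ((∏ t ∈ range j, (ξ.2 - (u (0, t)).2)) * ∏ s ∈ range i, (ξ.1 - (u (s, j)).1)) := by
  simp [newtonPoly, evalAt]

theorem newtonPoly_mem_monSpan (hS : IsLowerSet2 S) {i j : ℕ} (hij : (i, j) ∈ S) :
    newtonPoly u (i, j) ∈ monSpan F S := by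
  rw [newtonPoly, ← smul_eq_C_mul]
  refine Submodule.smul_mem _ _ ?_
  rw [mul_comm]
  exact mul_mem_monSpan hS hij
    (prod_X_sub_C_mem_span_pow _ _ _) (prod_X_sub_C_mem_span_pow _ _ _)

theorem evalAt_newtonPoly_self (hS : IsLowerSet2 S)
    (hy : ∀ m n, (m, n) ∈ S → (u (m, n)).2 = (u (0, n)).2)
    (hyd : ∀ n n', (0, n) ∈ S → (0, n') ∈ S → (u (0, n)).2 = (u (0, n')).2 → n = n')
    (hxd : ∀ m m' n, (m, n) ∈ S → (m', n) ∈ S → (u (m, n)).1 = (u (m', n)).1 → m = m')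
    {i j : ℕ} (hij : (i, j) ∈ S) : evalAt (u (i, j)) (newtonPoly u (i, j)) = 1 := by
  rw [evalAt_newtonPoly, hy i j hij]
  refine inv_mul_cancel₀ (mul_ne_zero (prod_ne_zero_iff.2 ?_) (prod_ne_zero_iff.2 ?_))
  · intro t ht
    have h0j : (0, j) ∈ S := hS _ hij _ (Nat.zero_le _) le_rfl
    have h0t : (0, t) ∈ S := hS _ hij _ (Nat.zero_le _) (mem_range.1 ht).le
    exact sub_ne_zero.2 fun h => (mem_range.1 ht).ne' (hyd j t h0j h0t h)
  · intro s hs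
    have hsj : (s, j) ∈ S := hS _ hij _ (mem_range.1 hs).le le_rfl
    exact sub_ne_zero.2 fun h => (mem_range.1 hs).ne' (hxd i s j hij hsj h)

theorem evalAt_newtonPoly_of_lt (hy : ∀ m n, (m, n) ∈ S → (u (m, n)).2 = (u (0, n)).2)
    {i j m n : ℕ} (hmn : (m, n) ∈ S) (hlt : toLex (n, m) < toLex (j, i)) :
    evalAt (u (m, n)) (newtonPoly u (i, j)) = 0 := by
  rw [evalAt_newtonPoly]
  rcases Prod.Lex.toLex_lt_toLex.1 hlt with hn | ⟨rfl, hm⟩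
  · have hrow : ∏ t ∈ range j, ((u (m, n)).2 - (u (0, t)).2) = 0 :=
      prod_eq_zero (mem_range.2 hn) (by rw [hy m n hmn, sub_self])
    rw [hrow, zero_mul, mul_zero]
  · have hcol : ∏ s ∈ range i, ((u (m, n)).1 - (u (s, n)).1) = 0 :=
      prod_eq_zero (mem_range.2 hm) (sub_self _)
    rw [hcol, mul_zero, mul_zero]

end Newton

/-- With `Ξ = {u_{mn}^x : (m,n) ∈ S_x(Ξ)}` and the Newton polynomials
`φ_{ij}^x`, the scheme `(Ξ, S_x(Ξ))` is regular: the `φ_{ij}^x` are linearly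
independent, they span `Span_F{x^i y^j : (i,j) ∈ S_x(Ξ)}`, and this span is an
interpolation space for `Ξ`. -/
theorem newton_basis_regular {F : Type*} [Field F] [DecidableEq F]
    (S : Finset (ℕ × ℕ)) (hS : IsLowerSet2 S)
    (u : ℕ × ℕ → F × F)
    (hy : ∀ m n, (m, n) ∈ S → (u (m, n)).2 = (u (0, n)).2)
    (hyd : ∀ n n', (0, n) ∈ S → (0, n') ∈ S → (u (0, n)).2 = (u (0, n')).2 → n = n')
    (hxd : ∀ m m' n, (m, n) ∈ S → (m', n) ∈ S → (u (m, n)).1 = (u (m', n)).1 → m = m')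
    (Φ : ℕ × ℕ → MvPolynomial (Fin 2) F)
    (hΦ : ∀ ij : ℕ × ℕ, Φ ij =
      C (((∏ t ∈ Finset.range ij.2, ((u (0, ij.2)).2 - (u (0, t)).2)) *
          ∏ s ∈ Finset.range ij.1, ((u (ij.1, ij.2)).1 - (u (s, ij.2)).1))⁻¹) *
        ((∏ t ∈ Finset.range ij.2, (X 1 - C ((u (0, t)).2))) *
          ∏ s ∈ Finset.range ij.1, (X 0 - C ((u (s, ij.2)).1)))) :
    LinearIndependent F (fun q : S => Φ q.1) ∧
      Submodule.span F (Set.range fun q : S => Φ q.1) = monSpan F S ∧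
      IsRegularScheme (S.image u) S := by
  obtain rfl : Φ = newtonPoly u := funext hΦ
  have hmem : ∀ q ∈ S, newtonPoly u q ∈ monSpan F S := fun _ hq => newtonPoly_mem_monSpan hS hq
  have hev : LinearIndependent F fun q : S => nodeEval (fun r : S => u r) (newtonPoly u q) := by
    refine linearIndependent_of_triangular (fun q : S => toLex (q.1.2, q.1.1))
      (fun q r h => Subtype.ext (Prod.swap_injective (toLex_inj.1 h))) _ (fun q => ?_) ?_
    · simp [evalAt_newtonPoly_self hS hy hyd hxd q.2]
    · intro q r hlt
      simpa using evalAt_newtonPoly_of_lt hy r.2 hlt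
  have hli := hev.of_comp
  exact ⟨hli, span_eq_monSpan_of_linearIndependent hmem hli,
    isRegularScheme_of_linearIndependent_nodeEval u hmem hev⟩
end

section
/- Let Ξ ⊂ F² be a finite set of distinct points, ≺ any term order, and Ξ' an A'-cartesian subset of Ξ. Then A' = N_≺(Ξ') ⊆ N_≺(Ξ): the lower set of the cartesian subset equals its Gröbner éscalier exponent set and is contained in the Gröbner éscalier exponent set of the full point set. -/
/-!
For `β = (a, b) ∉ A'` the grid polynomial `∏_{i<a} (x - xᵢ) · ∏_{j<b} (y - yⱼ)` vanishes on `Ξ'`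
(a point `(xᵢ, yⱼ)` with `j ≥ b` has `(i, b) ∈ A'`, hence `i < a`) and is `x^β` plus terms
componentwise below `β`. A term order refines the componentwise order, so `x^β` is its leading
monomial and `N_≺(Ξ') ⊆ A'`.

Conversely, by unitriangularity these grid polynomials and the monomials indexed by `A'` span
`F[x, y]`, while a polynomial supported on `A'` vanishing on `Ξ'` is zero: on each column through
its top row `y^J` it has too many roots `yⱼ`, so the coefficient of `y^J` has too many roots `xᵢ`.
Hence the grid polynomials span `I(Ξ')`. In a nonzero combination of them the `≺`-largest `β`
occurring cannot cancel, so every nonzero element of `I(Ξ')` has its leading exponent outside the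
lower set `A'`, and that exponent divides no element of `A'`. Finally `I(Ξ) ⊆ I(Ξ')`.
-/

open MvPolynomial Finset

/-- `le` is a term order on bivariate exponents: a linear order compatible with
addition in which `(0,0)` is minimal. -/
def IsTermOrder2 (le : ℕ × ℕ → ℕ × ℕ → Prop) : Prop :=
  (∀ a b, le a b ∨ le b a) ∧ (∀ a b, le a b → le b a → a = b) ∧
    (∀ a b c, le a b → le b c → le a c) ∧ (∀ a, le (0, 0) a) ∧
    (∀ a b c : ℕ × ℕ, le a b → le (a.1 + c.1, a.2 + c.2) (b.1 + c.1, b.2 + c.2))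

/-- The exponent set `N_≺(Ξ)` of the Gröbner éscalier of the vanishing ideal of `Ξ`
w.r.t. the term order `le`: exponents `α` such that `x^α` is divisible by no
`le`-leading monomial of a nonzero element of `I(Ξ)`. -/
noncomputable def escalier (F : Type*) [Field F] (Ξ : Finset (F × F))
    (le : ℕ × ℕ → ℕ × ℕ → Prop) : Set (ℕ × ℕ) :=
  {α | ¬ ∃ g ∈ vanishingIdeal F Ξ, g ≠ 0 ∧ ∃ d ∈ g.support,
    (∀ e ∈ g.support, le ((e 0 : ℕ), (e 1 : ℕ)) ((d 0 : ℕ), (d 1 : ℕ))) ∧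
    d 0 ≤ α.1 ∧ d 1 ≤ α.2}

namespace MvPolynomial

section IsMonicAt

variable {σ R : Type*}

def IsMonicAt [CommSemiring R] (p : MvPolynomial σ R) (α : σ →₀ ℕ) : Prop :=
  coeff α p = 1 ∧ ∀ s ∈ p.support, s ≤ α

variable [CommSemiring R] {p q : MvPolynomial σ R} {α γ : σ →₀ ℕ}

theorem IsMonicAt.ne_zero [Nontrivial R] (hp : IsMonicAt p α) : p ≠ 0 := by
  rintro rfl
  simpa using hp.1

theorem IsMonicAt.mem_support [Nontrivial R] (hp : IsMonicAt p α) : α ∈ p.support := by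
  simp [hp.1]

theorem IsMonicAt.coeff_eq_zero_of_not_le (hp : IsMonicAt p α) {s : σ →₀ ℕ} (hs : ¬s ≤ α) :
    coeff s p = 0 :=
  notMem_support_iff.1 fun h => hs (hp.2 s h)

theorem IsMonicAt.mul (hp : IsMonicAt p α) (hq : IsMonicAt q γ) : IsMonicAt (p * q) (α + γ) := by
  classical
  refine ⟨?_, fun s hs => ?_⟩
  · rw [coeff_mul, Finset.sum_eq_single (α, γ) _ (by simp), hp.1, hq.1, one_mul]
    rintro ⟨u, v⟩ huv hne
    rw [Finset.HasAntidiagonal.mem_antidiagonal] at huv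
    by_cases hu : u ≤ α
    · by_cases hv : v ≤ γ
      · have hvγ : v = γ := le_antisymm hv
          (le_of_add_le_add_left (huv ▸ add_le_add hu le_rfl : α + γ ≤ α + v))
        subst hvγ
        exact absurd (by simpa using add_right_cancel huv) hne
      · rw [hq.coeff_eq_zero_of_not_le hv, mul_zero]
    · rw [hp.coeff_eq_zero_of_not_le hu, zero_mul]
  · obtain ⟨u, hu, v, hv, rfl⟩ := Finset.mem_add.1 (support_mul p q hs)
    exact add_le_add (hp.2 u hu) (hq.2 v hv)

theorem isMonicAt_prod {ι : Type*} (t : Finset ι) {f : ι → MvPolynomial σ R} {a : ι → σ →₀ ℕ}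
    (h : ∀ i ∈ t, IsMonicAt (f i) (a i)) : IsMonicAt (∏ i ∈ t, f i) (∑ i ∈ t, a i) := by
  classical
  induction t using Finset.induction_on with
  | empty =>
    refine ⟨by simp, fun s hs => ?_⟩
    rw [Finset.prod_empty, ← C_1, C_apply] at hs
    exact (Finset.mem_singleton.1 (support_monomial_subset hs)).le
  | insert i t hi ih =>
    rw [Finset.prod_insert hi, Finset.sum_insert hi]
    exact (h i (by simp)).mul (ih fun j hj => h j (by simp [hj]))

theorem isMonicAt_X_sub_C {R : Type*} [CommRing R] (k : σ) (c : R) :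
    IsMonicAt (X k - C c) (Finsupp.single k 1) := by
  classical
  refine ⟨by simp [coeff_X, coeff_C, (Finsupp.single_ne_zero.2 one_ne_zero).symm], fun s hs => ?_⟩
  rcases Finset.mem_union.1 (support_sub σ _ _ hs) with hs | hs
  · rw [Finset.mem_singleton.1 (support_monomial_subset hs)]
  · rw [C_apply] at hs
    rw [Finset.mem_singleton.1 (support_monomial_subset hs)]
    exact zero_le

end IsMonicAt

section Span

variable {σ R : Type*} [CommRing R]

theorem restrictSupport_le_iff {s : Set (σ →₀ ℕ)} {W : Submodule R (MvPolynomial σ R)} :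
    restrictSupport R s ≤ W ↔ ∀ γ ∈ s, monomial γ 1 ∈ W := by
  rw [restrictSupport_eq_span, Submodule.span_le, Set.image_subset_iff]
  rfl

theorem IsMonicAt.sub_monomial_mem_restrictSupport {p : MvPolynomial σ R} {α : σ →₀ ℕ}
    (hp : IsMonicAt p α) : p - monomial α 1 ∈ restrictSupport R (Set.Iio α) := by
  classical
  rw [mem_restrictSupport_iff]
  intro s hs
  rw [Finset.mem_coe, mem_support_iff, coeff_sub, coeff_monomial] at hs
  have hsα : s ≠ α := by rintro rfl; simp [hp.1] at hs
  refine lt_of_le_of_ne ?_ hsα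
  by_contra hle
  simp [hp.coeff_eq_zero_of_not_le hle, Ne.symm hsα] at hs

theorem span_image_sup_restrictSupport_compl_eq_top
    {m : (σ →₀ ℕ) → MvPolynomial σ R} {B : Set (σ →₀ ℕ)} (hm : ∀ β ∈ B, IsMonicAt (m β) β) :
    Submodule.span R (m '' B) ⊔ restrictSupport R Bᶜ = ⊤ := by
  set W := Submodule.span R (m '' B) ⊔ restrictSupport R Bᶜ
  have hmonomial : ∀ γ, monomial γ 1 ∈ W := by
    intro γ
    induction γ using WellFoundedLT.induction with
    | _ γ ih =>
      by_cases hγ : γ ∈ B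
      · have hlower : restrictSupport R (Set.Iio γ) ≤ W := restrictSupport_le_iff.2 ih
        rw [← sub_sub_cancel (m γ) (monomial γ 1)]
        exact W.sub_mem (Submodule.mem_sup_left (Submodule.subset_span ⟨γ, hγ, rfl⟩))
          (hlower (hm γ hγ).sub_monomial_mem_restrictSupport)
      · exact Submodule.mem_sup_right (by simp [hγ])
  rw [eq_top_iff]
  intro p _
  exact restrictSupport_le_iff.2 (fun γ _ => hmonomial γ)
    ((mem_restrictSupport_iff R).2 (Set.subset_univ _))

end Span

section Grid

variable {R : Type*} [CommRing R]

noncomputable def gridPoly (x y : ℕ → R) (s : Fin 2 →₀ ℕ) : MvPolynomial (Fin 2) R :=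
  (∏ i ∈ range (s 0), (X 0 - C (x i))) * ∏ j ∈ range (s 1), (X 1 - C (y j))

theorem isMonicAt_gridPoly (x y : ℕ → R) (s : Fin 2 →₀ ℕ) : IsMonicAt (gridPoly x y s) s := by
  have h := (isMonicAt_prod (range (s 0)) fun i _ => isMonicAt_X_sub_C (0 : Fin 2) (x i)).mul
    (isMonicAt_prod (range (s 1)) fun j _ => isMonicAt_X_sub_C (1 : Fin 2) (y j))
  have hs : ∑ _i ∈ range (s 0), Finsupp.single (0 : Fin 2) 1 +
      ∑ _j ∈ range (s 1), Finsupp.single (1 : Fin 2) 1 = s := by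
    ext i
    fin_cases i <;> simp
  rwa [hs] at h

theorem eval_gridPoly_eq_zero {A : Finset (ℕ × ℕ)} (hA : IsLowerSet2 A) (x y : ℕ → R)
    {s : Fin 2 →₀ ℕ} (hs : (s 0, s 1) ∉ A) {ij : ℕ × ℕ} (hij : ij ∈ A) :
    eval ![x ij.1, y ij.2] (gridPoly x y s) = 0 := by
  simp only [gridPoly, map_mul, map_prod, map_sub, eval_X, eval_C, Matrix.cons_val_zero,
    Matrix.cons_val_one]
  rcases lt_or_ge ij.2 (s 1) with hj | hj
  · exact mul_eq_zero_of_right _ (Finset.prod_eq_zero (mem_range.2 hj) (sub_self _))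
  · have hi : ij.1 < s 0 := by
      by_contra! hi
      exact hs (hA _ (hA ij hij (ij.1, s 1) le_rfl hj) _ hi le_rfl)
    exact mul_eq_zero_of_left (Finset.prod_eq_zero (mem_range.2 hi) (sub_self _)) _

end Grid

section Slices

variable {R : Type*} [CommRing R]

noncomputable def evalX (p : MvPolynomial (Fin 2) R) (u : R) : Polynomial R :=
  ∑ s ∈ p.support, Polynomial.monomial (s 1) (coeff s p * u ^ s 0)

noncomputable def coeffY (p : MvPolynomial (Fin 2) R) (j : ℕ) : Polynomial R :=
  ∑ s ∈ p.support with s 1 = j, Polynomial.monomial (s 0) (coeff s p)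

theorem eval_evalX (p : MvPolynomial (Fin 2) R) (u v : R) :
    (evalX p u).eval v = eval ![u, v] p := by
  rw [evalX, eval_eq', Polynomial.eval_finsetSum]
  refine Finset.sum_congr rfl fun s _ => ?_
  simp [Fin.prod_univ_two, mul_assoc]

theorem natDegree_evalX_le {p : MvPolynomial (Fin 2) R} {J : ℕ} (h : ∀ s ∈ p.support, s 1 ≤ J)
    (u : R) : (evalX p u).natDegree ≤ J :=
  Polynomial.natDegree_sum_le_of_forall_le _ _ fun s hs =>
    (Polynomial.natDegree_monomial_le _).trans (h s hs)

theorem eval_coeffY (p : MvPolynomial (Fin 2) R) (j : ℕ) (u : R) :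
    (coeffY p j).eval u = (evalX p u).coeff j := by
  rw [coeffY, evalX, Polynomial.eval_finsetSum, Polynomial.finsetSum_coeff, Finset.sum_filter]
  refine Finset.sum_congr rfl fun s _ => ?_
  by_cases h : s 1 = j <;> simp [h, Polynomial.coeff_monomial]

theorem coeff_coeffY (p : MvPolynomial (Fin 2) R) (i j : ℕ) :
    (coeffY p j).coeff i = coeff (Finsupp.single 0 i + Finsupp.single 1 j) p := by
  rw [coeffY, Polynomial.finsetSum_coeff, Finset.sum_filter]
  simp only [Polynomial.coeff_monomial]
  rw [Finset.sum_eq_single (Finsupp.single 0 i + Finsupp.single 1 j)]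
  · simp
  · intro s _ hne
    split_ifs with h1 h0
    · refine absurd ?_ hne
      ext k
      fin_cases k <;> simp [h0, h1]
    · rfl
    · rfl
  · intro he
    simp [notMem_support_iff.1 he]

theorem single_zero_add_single_one (s : Fin 2 →₀ ℕ) :
    Finsupp.single 0 (s 0) + Finsupp.single 1 (s 1) = s := by
  ext k
  fin_cases k <;> simp

theorem eq_zero_of_eval_grid_eq_zero [IsDomain R] {A : Finset (ℕ × ℕ)} (hA : IsLowerSet2 A)
    {x y : ℕ → R} (hx : Set.InjOn x {i | ∃ j, (i, j) ∈ A}) (hy : Set.InjOn y {j | ∃ i, (i, j) ∈ A})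
    {p : MvPolynomial (Fin 2) R} (hp : ∀ s ∈ p.support, (s 0, s 1) ∈ A)
    (hvan : ∀ ij ∈ A, eval ![x ij.1, y ij.2] p = 0) : p = 0 := by
  by_contra hp0
  obtain ⟨s₀, hs₀, hJ⟩ := Finset.exists_mem_eq_sup p.support (support_nonempty.2 hp0) (· 1)
  set J := p.support.sup (· 1)
  have hdeg : ∀ s ∈ p.support, s 1 ≤ J := fun s hs => Finset.le_sup (f := (· 1)) hs
  have hcol : ∀ i, (i, J) ∈ A → evalX p (x i) = 0 := by
    intro i hi
    have hcolumn : ∀ j : Fin (J + 1), (i, (j : ℕ)) ∈ A := fun j =>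
      hA _ hi _ le_rfl (Nat.le_of_lt_succ j.2)
    refine Polynomial.eq_zero_of_natDegree_lt_card_of_eval_eq_zero _
      (f := fun j : Fin (J + 1) => y j)
      (fun a b hab => Fin.ext (hy ⟨i, hcolumn a⟩ ⟨i, hcolumn b⟩ hab)) (fun j => ?_) ?_
    · rw [eval_evalX]
      exact hvan (i, j) (hcolumn j)
    · simpa using Nat.lt_succ_of_le (natDegree_evalX_le hdeg (x i))
  have hrow : coeffY p J = 0 := by
    by_contra hr
    set D := (coeffY p J).natDegree
    have hD : (D, J) ∈ A := by
      have hlead : coeff (Finsupp.single 0 D + Finsupp.single 1 J) p ≠ 0 := by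
        rw [← coeff_coeffY]
        exact Polynomial.leadingCoeff_ne_zero.2 hr
      simpa using hp _ (mem_support_iff.2 hlead)
    have hline : ∀ i : Fin (D + 1), ((i : ℕ), J) ∈ A := fun i =>
      hA _ hD _ (Nat.le_of_lt_succ i.2) le_rfl
    refine hr (Polynomial.eq_zero_of_natDegree_lt_card_of_eval_eq_zero _
      (f := fun i : Fin (D + 1) => x i) (fun a b hab => Fin.ext (hx ⟨J, hline a⟩ ⟨J, hline b⟩ hab))
      (fun i => ?_) (by simp [D]))
    rw [eval_coeffY, hcol i (hline i), Polynomial.coeff_zero]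
  have h := coeff_coeffY p (s₀ 0) J
  rw [hrow, Polynomial.coeff_zero, hJ, single_zero_add_single_one] at h
  exact mem_support_iff.1 hs₀ h.symm

end Slices

end MvPolynomial

namespace IsTermOrder2

variable {le : ℕ × ℕ → ℕ × ℕ → Prop}

theorem refl (hle : IsTermOrder2 le) (a : ℕ × ℕ) : le a a :=
  (hle.1 a a).elim id id

theorem trans (hle : IsTermOrder2 le) {a b c : ℕ × ℕ} : le a b → le b c → le a c :=
  hle.2.2.1 a b c

theorem le_of_le (hle : IsTermOrder2 le) {s t : Fin 2 →₀ ℕ} (hst : s ≤ t) :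
    le (s 0, s 1) (t 0, t 1) := by
  have h := hle.2.2.2.2 (0, 0) (t 0 - s 0, t 1 - s 1) (s 0, s 1) (hle.2.2.2.1 _)
  simp only [zero_add, Nat.sub_add_cancel (hst 0), Nat.sub_add_cancel (hst 1)] at h
  exact h

theorem eq_of_le_of_le (hle : IsTermOrder2 le) {s t : Fin 2 →₀ ℕ}
    (hst : le (s 0, s 1) (t 0, t 1)) (hts : le (t 0, t 1) (s 0, s 1)) : s = t := by
  have h := Prod.ext_iff.1 (hle.2.1 _ _ hst hts)
  ext i
  fin_cases i
  exacts [h.1, h.2]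

theorem exists_max_image (hle : IsTermOrder2 le) {ι : Type*} (t : Finset ι) (f : ι → ℕ × ℕ)
    (ht : t.Nonempty) : ∃ i ∈ t, ∀ j ∈ t, le (f j) (f i) := by
  induction ht using Finset.Nonempty.cons_induction with
  | singleton i => exact ⟨i, by simp, by simpa using hle.refl (f i)⟩
  | cons i t hi _ ih =>
    obtain ⟨k, hk, hmax⟩ := ih
    rcases hle.1 (f i) (f k) with hik | hki
    · exact ⟨k, by simp [hk], by simpa [hik] using hmax⟩
    · exact ⟨i, by simp, by simpa [hle.refl (f i)] using fun j hj => hle.trans (hmax j hj) hki⟩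

theorem mem_of_mem_span_of_isLeading (hle : IsTermOrder2 le) {R : Type*} [CommSemiring R]
    {m : (Fin 2 →₀ ℕ) → MvPolynomial (Fin 2) R} {B : Set (Fin 2 →₀ ℕ)}
    (hm : ∀ β ∈ B, IsMonicAt (m β) β) {g : MvPolynomial (Fin 2) R}
    (hg : g ∈ Submodule.span R (m '' B)) {d : Fin 2 →₀ ℕ} (hd : d ∈ g.support)
    (hdmax : ∀ e ∈ g.support, le (e 0, e 1) (d 0, d 1)) : d ∈ B := by
  classical
  obtain ⟨l, hl, rfl⟩ := (Finsupp.mem_span_image_iff_linearCombination R).1 hg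
  have hlB : ↑l.support ⊆ B := hl
  rw [Finsupp.linearCombination_apply, Finsupp.sum] at hd hdmax
  have hcover : ∀ e ∈ (∑ β ∈ l.support, l β • m β).support, ∃ β ∈ l.support, e ≤ β := by
    intro e he
    rw [mem_support_iff, coeff_sum] at he
    obtain ⟨β, hβ, hne⟩ := Finset.exists_ne_zero_of_sum_ne_zero he
    rw [coeff_smul, smul_eq_mul] at hne
    exact ⟨β, hβ, (hm β (hlB hβ)).2 e (mem_support_iff.2 (right_ne_zero_of_mul hne))⟩
  obtain ⟨β₀, hβ₀, hmax⟩ :=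
    hle.exists_max_image l.support (fun β => (β 0, β 1)) (let ⟨β, hβ, _⟩ := hcover d hd; ⟨β, hβ⟩)
  have hcoeff : coeff β₀ (∑ β ∈ l.support, l β • m β) = l β₀ := by
    rw [coeff_sum, Finset.sum_eq_single β₀, coeff_smul, (hm β₀ (hlB hβ₀)).1, smul_eq_mul, mul_one]
    · intro β hβ hne
      rw [coeff_smul, (hm β (hlB hβ)).coeff_eq_zero_of_not_le, smul_zero]
      exact fun hβ₀β => hne (hle.eq_of_le_of_le (hmax β hβ) (hle.le_of_le hβ₀β))
    · exact fun h => absurd hβ₀ h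
  have hβ₀d := hdmax β₀ (mem_support_iff.2 (hcoeff ▸ Finsupp.mem_support_iff.1 hβ₀))
  obtain ⟨β, hβ, hdβ⟩ := hcover d hd
  rw [hle.eq_of_le_of_le (hle.trans (hle.le_of_le hdβ) (hmax β hβ)) hβ₀d]
  exact hlB hβ₀

end IsTermOrder2

section VanishingIdeal

variable {F : Type*} [Field F]

theorem mem_vanishingIdeal_iff_forall_eval {Ξ : Finset (F × F)} {g : MvPolynomial (Fin 2) F} :
    g ∈ vanishingIdeal F Ξ ↔ ∀ ξ ∈ Ξ, eval ![ξ.1, ξ.2] g = 0 := by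
  simp only [_root_.vanishingIdeal, Ideal.mem_iInf, RingHom.mem_ker]

theorem vanishingIdeal_anti {Ξ Ξ' : Finset (F × F)} (h : Ξ' ⊆ Ξ) :
    vanishingIdeal F Ξ ≤ vanishingIdeal F Ξ' := fun _ hg =>
  mem_vanishingIdeal_iff_forall_eval.2 fun ξ hξ => mem_vanishingIdeal_iff_forall_eval.1 hg ξ (h hξ)

theorem escalier_anti {Ξ Ξ' : Finset (F × F)} (h : Ξ' ⊆ Ξ) (le : ℕ × ℕ → ℕ × ℕ → Prop) :
    escalier F Ξ' le ⊆ escalier F Ξ le := fun _ hα ⟨g, hg, hlead⟩ =>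
  hα ⟨g, vanishingIdeal_anti h hg, hlead⟩

variable [DecidableEq F]

theorem mem_vanishingIdeal_image_iff_forall_eval {A : Finset (ℕ × ℕ)} {x y : ℕ → F}
    {g : MvPolynomial (Fin 2) F} :
    g ∈ vanishingIdeal F (A.image fun ij => (x ij.1, y ij.2)) ↔
      ∀ ij ∈ A, eval ![x ij.1, y ij.2] g = 0 := by
  rw [mem_vanishingIdeal_iff_forall_eval, Finset.forall_mem_image]

theorem mem_span_gridPoly_of_mem_vanishingIdeal {A : Finset (ℕ × ℕ)} (hA : IsLowerSet2 A)
    {x y : ℕ → F} (hx : Set.InjOn x {i | ∃ j, (i, j) ∈ A}) (hy : Set.InjOn y {j | ∃ i, (i, j) ∈ A})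
    {g : MvPolynomial (Fin 2) F} (hg : g ∈ vanishingIdeal F (A.image fun ij => (x ij.1, y ij.2))) :
    g ∈ Submodule.span F (gridPoly x y '' {s | (s 0, s 1) ∉ A}) := by
  have hspan : Submodule.span F (gridPoly x y '' {s | (s 0, s 1) ∉ A}) ≤
      (vanishingIdeal F (A.image fun ij => (x ij.1, y ij.2))).restrictScalars F := by
    rw [Submodule.span_le]
    rintro _ ⟨s, hs, rfl⟩
    exact mem_vanishingIdeal_image_iff_forall_eval.2 fun ij hij =>
      eval_gridPoly_eq_zero hA x y hs hij
  obtain ⟨u, hu, v, hv, rfl⟩ := Submodule.mem_sup.1 <|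
    (span_image_sup_restrictSupport_compl_eq_top fun s _ => isMonicAt_gridPoly x y s).ge
      (Submodule.mem_top (x := g))
  have hvI := sub_mem hg (hspan hu)
  rw [add_sub_cancel_left] at hvI
  have hv0 : v = 0 := eq_zero_of_eval_grid_eq_zero hA hx hy
    (fun s hs => by simpa using (mem_restrictSupport_iff F).1 hv hs)
    (mem_vanishingIdeal_image_iff_forall_eval.1 hvI)
  rwa [hv0, add_zero]

end VanishingIdeal

section Cartesian

variable {F : Type*} [Field F] [DecidableEq F] {A : Finset (ℕ × ℕ)} {Ξ : Finset (F × F)}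
  {le : ℕ × ℕ → ℕ × ℕ → Prop}

theorem escalier_subset_of_isCartesianWith (hcart : IsCartesianWith A Ξ) (hle : IsTermOrder2 le) :
    escalier F Ξ le ⊆ A := by
  obtain ⟨hA, x, y, -, -, rfl⟩ := hcart
  intro α hα
  by_contra hαA
  set e : Fin 2 →₀ ℕ := Finsupp.single 0 α.1 + Finsupp.single 1 α.2
  have he : IsMonicAt (gridPoly x y e) e := isMonicAt_gridPoly x y e
  have hvan : gridPoly x y e ∈ vanishingIdeal F (A.image fun ij => (x ij.1, y ij.2)) :=
    mem_vanishingIdeal_image_iff_forall_eval.2 fun ij hij =>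
      eval_gridPoly_eq_zero hA x y (by simpa [e] using hαA) hij
  exact hα ⟨_, hvan, he.ne_zero, e, he.mem_support, fun s hs => hle.le_of_le (he.2 s hs),
    by simp [e], by simp [e]⟩

theorem coe_subset_escalier_of_isCartesianWith (hcart : IsCartesianWith A Ξ)
    (hle : IsTermOrder2 le) : (A : Set (ℕ × ℕ)) ⊆ escalier F Ξ le := by
  obtain ⟨hA, x, y, hx, hy, rfl⟩ := hcart
  rintro α hα ⟨g, hg, -, d, hd, hdmax, hd0, hd1⟩
  have hdA : (d 0, d 1) ∉ A := hle.mem_of_mem_span_of_isLeading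
    (fun s _ => isMonicAt_gridPoly x y s) (mem_span_gridPoly_of_mem_vanishingIdeal hA hx hy hg)
    hd hdmax
  exact hdA (hA α hα _ hd0 hd1)

end Cartesian

/-- If `Ξ'` is an `A'`-cartesian subset of `Ξ` and `≺` any term
order, then `A' = N_≺(Ξ') ⊆ N_≺(Ξ)`. -/
theorem cartesian_subset_escalier {F : Type*} [Field F] [DecidableEq F]
    (Ξ Ξ' : Finset (F × F)) (A' : Finset (ℕ × ℕ))
    (le : ℕ × ℕ → ℕ × ℕ → Prop) (hle : IsTermOrder2 le)
    (hsub : Ξ' ⊆ Ξ) (hcart : IsCartesianWith A' Ξ') :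
    (A' : Set (ℕ × ℕ)) = escalier F Ξ' le ∧ escalier F Ξ' le ⊆ escalier F Ξ le :=
  ⟨(coe_subset_escalier_of_isCartesianWith hcart hle).antisymm
    (escalier_subset_of_isCartesianWith hcart hle), escalier_anti hsub le⟩
end

section
/- Let Ξ' ⊂ F² be a cartesian set whose lower set S_x(Ξ') = L_x(m_0,…,m_{n_0}) satisfies n_0 = n_1 = ⋯ = n_{m_{n_0}} (all columns up to the shortest-row length have full height), and let A = {(x̄^{(0)},ȳ),…,(x̄^{(k)},ȳ)} be a set of k+1 points on a new horizontal line with ȳ distinct from all ordinates of Ξ', k ≤ m_{n_0}, and each abscissa x̄^{(i)} equal to some abscissa occurring in the shortest row of Ξ'. Then Ξ' ∪ A is cartesian. -/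
open MvPolynomial Finset

/-!
Write `Ξ'` as the image of a lower set `B` under `(i, j) ↦ (x i, y j)`, let `J` be the index of
the top row of `B` and `r` its length, so that every row of `B` contains `[0, r)`. The abscissae
in `A` occur on the row of `Ξ'` at height `y J`, hence `A ⊆ x '' [0, r)`. Since every row contains
`[0, r)`, permuting the values of `x` on `[0, r)` does not change the image of `B`, so we may
assume that `x` maps `[0, #A)` onto `A`. Then `Ξ' ∪ A × {ȳ}` is the image of the lower set
`B ∪ [0, #A) × {J + 1}`, with `y` extended by `ȳ` at `J + 1`.
-/

theorem List.Nodup.injOn_getD {α : Type*} {l : List α} (hl : l.Nodup) (d : ℕ → α) :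
    Set.InjOn (fun i => l.getD i (d i)) (Set.Iio l.length) := by
  intro i hi j hj hij
  simp only [List.getD_eq_getElem _ _ hi, List.getD_eq_getElem _ _ hj] at hij
  exact hl.getElem_inj_iff.1 hij

theorem List.image_range_getD {α : Type*} [DecidableEq α] (l : List α) (d : ℕ → α) {n : ℕ}
    (hn : n ≤ l.length) :
    (Finset.range n).image (fun i => l.getD i (d i)) = (l.take n).toFinset := by
  ext a
  simp only [Finset.mem_image, Finset.mem_range, List.mem_toFinset, List.mem_take_iff_getElem]
  constructor
  · rintro ⟨i, hi, rfl⟩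
    exact ⟨i, by omega, (List.getD_eq_getElem _ _ (by omega)).symm⟩
  · rintro ⟨i, hi, rfl⟩
    exact ⟨i, by omega, List.getD_eq_getElem _ _ (by omega)⟩

theorem exists_reorder_prefix {α : Type*} [DecidableEq α] {g : ℕ → α} {r : ℕ}
    (hg : Set.InjOn g (Set.Iio r)) {A : Finset α} (hA : A ⊆ (range r).image g) :
    ∃ g' : ℕ → α, (∀ i, r ≤ i → g' i = g i) ∧ Set.InjOn g' (Set.Iio r) ∧
      g' '' Set.Iio r = g '' Set.Iio r ∧ (range #A).image g' = A := by
  set S := (range r).image g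
  have hS : #S = r := by rw [card_image_of_injOn (by simpa using hg), card_range]
  set l := A.toList ++ (S \ A).toList
  have hl : l.length = r := by
    simp only [l, List.length_append, length_toList, card_sdiff_of_subset hA, hS]
    have := card_le_card hA
    omega
  have hnd : l.Nodup := A.nodup_toList.append (S \ A).nodup_toList
    (by simp only [List.Disjoint, mem_toList, mem_sdiff]; tauto)
  refine ⟨fun i => l.getD i (g i), fun i hi => List.getD_eq_default _ _ (hl ▸ hi),
    hl ▸ hnd.injOn_getD g, ?_, ?_⟩
  · rw [← coe_range, ← coe_image, ← coe_image, List.image_range_getD l g hl.ge,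
      List.take_of_length_le hl.le]
    simp [l, S, union_sdiff_of_subset hA]
  · rw [List.image_range_getD l g (by simp [l]), List.take_left' (by simp)]
    simp

theorem IsLowerSet2.mem_iff_lt_sup {B : Finset (ℕ × ℕ)} (hB : IsLowerSet2 B) {i j : ℕ} :
    (i, j) ∈ B ↔ i < (B.filter (·.2 = j)).sup (·.1 + 1) := by
  rw [Finset.lt_sup_iff]
  constructor
  · exact fun h => ⟨(i, j), mem_filter.2 ⟨h, rfl⟩, i.lt_succ_self⟩
  · rintro ⟨q, hq, hiq⟩
    obtain ⟨hqB, rfl⟩ := mem_filter.1 hq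
    exact hB q hqB (i, q.2) (Nat.lt_succ_iff.1 hiq) le_rfl

theorem Set.InjOn.of_agree_off_Iio {α : Type*} {s : Set ℕ} {g h : ℕ → α} {r : ℕ}
    (hh : Set.InjOn h s) (hr : Set.Iio r ⊆ s) (hg : Set.InjOn g (Set.Iio r))
    (hoff : ∀ i, r ≤ i → g i = h i) (hsub : g '' Set.Iio r ⊆ h '' Set.Iio r) :
    Set.InjOn g s := by
  have hmix : ∀ i < r, ∀ i' ∈ s, r ≤ i' → g i ≠ g i' := by
    intro i hi i' hi' hri' heq
    obtain ⟨i₀, hi₀, he⟩ := hsub ⟨i, hi, rfl⟩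
    have := hh (hr hi₀) hi' (by rw [he, heq, hoff i' hri'])
    exact absurd (this ▸ hi₀ : i' < r) (not_lt.2 hri')
  intro i hi i' hi' heq
  rcases lt_or_ge i r with h1 | h1 <;> rcases lt_or_ge i' r with h2 | h2
  · exact hg h1 h2 heq
  · exact absurd heq (hmix i h1 i' hi' h2)
  · exact absurd heq.symm (hmix i' h2 i hi h1)
  · exact hh hi hi' (by rwa [hoff i h1, hoff i' h2] at heq)

theorem image_subset_image_of_agree_off_Iio {α β : Type*} [DecidableEq α] [DecidableEq β]
    {B : Finset (ℕ × ℕ)} {g h : ℕ → α} {y : ℕ → β} {r : ℕ}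
    (hrow : ∀ p ∈ B, ∀ i < r, (i, p.2) ∈ B) (hoff : ∀ i, r ≤ i → g i = h i)
    (hsub : g '' Set.Iio r ⊆ h '' Set.Iio r) :
    B.image (fun p => (g p.1, y p.2)) ⊆ B.image (fun p => (h p.1, y p.2)) := by
  intro z hz
  obtain ⟨p, hp, rfl⟩ := mem_image.1 hz
  rcases lt_or_ge p.1 r with hpr | hpr
  · obtain ⟨i, hi, hgi⟩ := hsub ⟨p.1, hpr, rfl⟩
    exact mem_image.2 ⟨(i, p.2), hrow p hp i hi, by rw [hgi]⟩
  · exact mem_image.2 ⟨p, hp, by rw [hoff _ hpr]⟩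

theorem isCartesianWith_union_row {F : Type*} [Field F] [DecidableEq F] {B : Finset (ℕ × ℕ)}
    (hB : IsLowerSet2 B) {t k : ℕ} (ht : ∀ p ∈ B, p.2 < t)
    (hk : ∀ i < k, ∀ j < t, (i, j) ∈ B)
    {x y : ℕ → F} (hx : Set.InjOn x ({i | ∃ j, (i, j) ∈ B} ∪ Set.Iio k))
    (hy : Set.InjOn y {j | ∃ i, (i, j) ∈ B}) {ybar : F} (hybar : ∀ p ∈ B, y p.2 ≠ ybar) :
    IsCartesianWith (B ∪ range k ×ˢ {t})
      (B.image (fun ij => (x ij.1, y ij.2)) ∪ (range k).image fun i => (x i, ybar)) := by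
  have hyB : Set.EqOn (Function.update y t ybar) y {j | ∃ i, (i, j) ∈ B} :=
    fun j ⟨i, hij⟩ => Function.update_of_ne (ht _ hij).ne _ _
  refine ⟨?_, x, Function.update y t ybar, hx.mono ?_, ?_, ?_⟩
  · rintro a ha b hb₁ hb₂
    simp only [mem_union, mem_product, mem_range, mem_singleton] at ha ⊢
    rcases ha with ha | ⟨ha₁, rfl⟩
    · exact Or.inl (hB a ha b hb₁ hb₂)
    · rcases hb₂.lt_or_eq with h | h
      · exact Or.inl (hk b.1 (by omega) b.2 h)
      · exact Or.inr ⟨by omega, h⟩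
  · rintro i ⟨j, hj⟩
    simp only [mem_union, mem_product, mem_range, mem_singleton] at hj
    rcases hj with hj | ⟨hi, -⟩
    exacts [Or.inl ⟨j, hj⟩, Or.inr hi]
  · have hsub :
        {j | ∃ i, (i, j) ∈ B ∪ range k ×ˢ {t}} ⊆ insert t {j | ∃ i, (i, j) ∈ B} := by
      rintro j ⟨i, hij⟩
      simp only [mem_union, mem_product, mem_range, mem_singleton] at hij
      rcases hij with hij | ⟨-, rfl⟩
      exacts [Or.inr ⟨i, hij⟩, Or.inl rfl]
    have htB : t ∉ {j | ∃ i, (i, j) ∈ B} := fun ⟨_, hi⟩ => (ht _ hi).false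
    refine ((Set.injOn_insert htB).2 ⟨hy.congr hyB.symm, ?_⟩).mono hsub
    rintro ⟨j, hj, h⟩
    rw [hyB hj, Function.update_self] at h
    obtain ⟨i, hij⟩ := hj
    exact hybar _ hij h
  · rw [image_union]
    congr 1
    · exact image_congr fun p hp => by simp only [hyB ⟨p.1, hp⟩]
    · ext z
      simp [eq_comm]

theorem isCartesian_image_union_row {F : Type*} [Field F] [DecidableEq F] {B : Finset (ℕ × ℕ)}
    (hB : IsLowerSet2 B) {t r : ℕ} (ht : ∀ p ∈ B, p.2 < t)
    (hr : ∀ i < r, ∀ j < t, (i, j) ∈ B)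
    {x y : ℕ → F} (hx : Set.InjOn x ({i | ∃ j, (i, j) ∈ B} ∪ Set.Iio r))
    (hy : Set.InjOn y {j | ∃ i, (i, j) ∈ B}) {A : Finset F} (hA : A ⊆ (range r).image x)
    {ybar : F} (hybar : ∀ p ∈ B, y p.2 ≠ ybar) :
    IsCartesian (B.image (fun ij => (x ij.1, y ij.2)) ∪ A.image fun xb => (xb, ybar)) := by
  obtain ⟨x', hoff, hx'r, hx'im, hx'A⟩ :=
    exists_reorder_prefix (hx.mono Set.subset_union_right) hA
  have hrow : ∀ p ∈ B, ∀ i < r, (i, p.2) ∈ B := fun p hp i hi => hr i hi p.2 (ht p hp)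
  have hΞ : B.image (fun ij => (x' ij.1, y ij.2)) = B.image (fun ij => (x ij.1, y ij.2)) :=
    (image_subset_image_of_agree_off_Iio hrow hoff hx'im.le).antisymm
      (image_subset_image_of_agree_off_Iio hrow (fun i hi => (hoff i hi).symm) hx'im.ge)
  have hnewrow : (range #A).image (fun i => (x' i, ybar)) = A.image fun xb => (xb, ybar) := by
    conv_rhs => rw [← hx'A, image_image]
    rfl
  have hAr : #A ≤ r := (card_le_card hA).trans (card_image_le.trans (card_range r).le)
  have hx' : Set.InjOn x' ({i | ∃ j, (i, j) ∈ B} ∪ Set.Iio #A) :=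
    (hx.of_agree_off_Iio Set.subset_union_right hx'r hoff hx'im.le).mono
      (Set.union_subset_union_right _ (Set.Iio_subset_Iio hAr))
  rw [← hΞ, ← hnewrow]
  exact ⟨_, isCartesianWith_union_row hB ht (fun i hi => hr i (hi.trans_le hAr)) hx' hy hybar⟩

theorem union_row_cartesian_general {F : Type*} [Field F] [DecidableEq F]
    (Ξ' : Finset (F × F)) (hΞ' : IsCartesian Ξ')
    (ybar : F) (A : Finset F)
    (hy : ∀ p ∈ Ξ', p.2 ≠ ybar)
    (hA : ∀ xb ∈ A, ∀ y' : F, (∃ x', (x', y') ∈ Ξ') → (xb, y') ∈ Ξ') :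
    IsCartesian (Ξ' ∪ A.image fun xb => (xb, ybar)) := by
  obtain ⟨B, hB, x, y, hxinj, hyinj, rfl⟩ := hΞ'
  have hybar : ∀ p ∈ B, y p.2 ≠ ybar := fun p hp => hy _ (mem_image_of_mem _ hp)
  rcases B.eq_empty_or_nonempty with rfl | hBne
  · -- `Ξ' = ∅`: let `x` enumerate `A` and put the new row at height `0`.
    refine isCartesian_image_union_row hB (t := 0) (r := #A) (by simp) (by simp)
      (x := fun i => A.toList.getD i 0) ?_ hyinj ?_ hybar
    · simpa using A.nodup_toList.injOn_getD fun _ => 0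
    · rw [List.image_range_getD _ _ (length_toList A).ge,
        List.take_of_length_le (length_toList A).le, toList_toFinset]
  obtain ⟨p, hpB, hpmax⟩ := B.exists_max_image Prod.snd hBne
  set r := (B.filter (·.2 = p.2)).sup (·.1 + 1)
  have hr : ∀ i < r, ∀ j < p.2 + 1, (i, j) ∈ B := fun i hi j hj =>
    hB (i, p.2) (hB.mem_iff_lt_sup.2 hi) (i, j) le_rfl (Nat.lt_succ_iff.1 hj)
  have hcols : Set.Iio r ⊆ {i | ∃ j, (i, j) ∈ B} :=
    fun i hi => ⟨p.2, hr i hi p.2 p.2.lt_succ_self⟩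
  have hAr : A ⊆ (range r).image x := by
    intro a ha
    obtain ⟨q, hq, hqa⟩ := mem_image.1 (hA a ha (y p.2) ⟨_, mem_image_of_mem _ hpB⟩)
    obtain ⟨rfl, hyq⟩ := Prod.mk.inj hqa
    have hq₂ : q.2 = p.2 := hyinj ⟨_, hq⟩ ⟨_, hpB⟩ hyq
    exact mem_image_of_mem x (mem_range.2 (hB.mem_iff_lt_sup.1 (hq₂ ▸ hq)))
  exact isCartesian_image_union_row hB (fun q hq => Nat.lt_succ_of_le (hpmax q hq)) hr
    (by rwa [Set.union_eq_left.2 hcols]) hyinj hAr hybar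

/-- Let `Ξ'` be a cartesian set and `ȳ` an ordinate not occurring in
`Ξ'`. If `A` is a non-empty set of abscissae, each occurring on every horizontal line
of `Ξ'` (i.e. occurring in the shortest row, by nestedness), and `#A` does not exceed
the number of points on any line of `Ξ'`, then adjoining the row
`{(xb, ȳ) : xb ∈ A}` to `Ξ'` again gives a cartesian set. -/
theorem union_row_cartesian {F : Type*} [Field F] [DecidableEq F]
    (Ξ' : Finset (F × F)) (hΞ' : IsCartesian Ξ')
    (ybar : F) (A : Finset F) (hAne : A.Nonempty)
    (hy : ∀ p ∈ Ξ', p.2 ≠ ybar)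
    (hA : ∀ xb ∈ A, ∀ y' : F, (∃ x', (x', y') ∈ Ξ') → (xb, y') ∈ Ξ')
    (hcard : ∀ b ∈ Ξ'.image Prod.snd, A.card ≤ (Ξ'.filter fun p => p.2 = b).card) :
    IsCartesian (Ξ' ∪ A.image fun xb => (xb, ybar)) :=
  union_row_cartesian_general Ξ' hΞ' ybar A hy hA
end
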